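/- Let A be a formally real integral domain which is an ℝ-algebra, let I₀ be an imaginary unit, and let f, h ∈ Quaternion A \ {0} be such that f * h is I₀-sliced but not scalar and h * f is I₀-sliced but not scalar. Then either f and h are both I₀-sliced, or there exist imaginary units J₀, K₀ whose vector parts are orthogonal to that of I₀ in ℝ³ and nonzero I₀-sliced elements f̃, h̃ ∈ Quaternion A with f = f̃ * ι(K₀) and h = ι(J₀) * h̃. (Theorem 6.1, case (i).) -/

import Mathlib

/-!
Both `x = f * h` and `y = h * f` lie in the commutative slice `A + A·ι(I₀)` and have the same
real part and the same norm, so, `A` being a domain, `y = x` or `y = x̄`. Since `x * f = f * y`,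
`y * h = h * x` and the `ι(I₀)`-coordinate of `x` is nonzero, `f` and `h` then both commute or
both anticommute with `ι(I₀)`. Commuting with `ι(I₀)` is being `I₀`-sliced. In the anticommuting
case take a real imaginary unit `J₀` anticommuting with (equivalently, orthogonal to) `I₀`: then
`f * ι(J₀)` and `ι(J₀) * h` commute with `ι(I₀)`, and `f = -(f * ι(J₀)) * ι(J₀)`,
`h = ι(J₀) * -(ι(J₀) * h)`.
-/

open Quaternion

/-- The componentwise extension `ι : ℍ[ℝ] → ℍ[A]` of `algebraMap ℝ A`. -/
noncomputable def qmap {A : Type*} [CommRing A] [Algebra ℝ A] (q : Quaternion ℝ) :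
    Quaternion A :=
  ⟨algebraMap ℝ A q.re, algebraMap ℝ A q.imI, algebraMap ℝ A q.imJ, algebraMap ℝ A q.imK⟩

/-- An imaginary unit: a real quaternion with zero real part squaring to `-1`. -/
def IsImaginaryUnit (I : Quaternion ℝ) : Prop := I.re = 0 ∧ I ^ 2 = -1

/-- `q` is `I`-sliced if `q = a + b·ι(I)` for some `a, b ∈ A`. -/
noncomputable def IsSliced {A : Type*} [CommRing A] [Algebra ℝ A]
    (I : Quaternion ℝ) (q : Quaternion A) : Prop :=
  ∃ a b : A, q = (a : Quaternion A) + (b : Quaternion A) * qmap I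

/-- The vector parts of `I` and `M` are orthogonal in `ℝ³`. -/
def OrthIm (I M : Quaternion ℝ) : Prop :=
  I.imI * M.imI + I.imJ * M.imJ + I.imK * M.imK = 0

/-- `A` is formally real: a sum of four squares vanishes only trivially. -/
def FormallyRealFour (A : Type*) [CommRing A] : Prop :=
  ∀ a b c d : A, a ^ 2 + b ^ 2 + c ^ 2 + d ^ 2 = 0 → a = 0 ∧ b = 0 ∧ c = 0 ∧ d = 0

/-- `q` is scalar if its vector part vanishes. -/
def IsScalarQ {A : Type*} [CommRing A] (q : Quaternion A) : Prop := q.im = 0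

lemma Quaternion.re_mul_comm {R : Type*} [CommRing R] (p q : ℍ[R]) :
    (p * q).re = (q * p).re := by
  simp only [re_mul]; ring

@[simps]
def quatI : ℍ[ℝ] := ⟨0, 1, 0, 0⟩

@[simps]
def quatJ : ℍ[ℝ] := ⟨0, 0, 1, 0⟩

lemma exists_ne_zero_mul_quatI_eq_mul {I : ℍ[ℝ]} (hI : I * I = -1) :
    ∃ u : ℍ[ℝ], u ≠ 0 ∧ u * quatI = I * u := by
  have hi : quatI * quatI = -1 := by ext <;> simp [re_mul, imI_mul, imJ_mul, imK_mul]
  by_cases hIi : I = -quatI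
  · refine ⟨quatJ, fun h0 => by simpa using congrArg QuaternionAlgebra.imJ h0, ?_⟩
    subst hIi; ext <;> simp [re_mul, imI_mul, imJ_mul, imK_mul]
  · -- `(i + I) * i = -1 + I * i = I * (i + I)`
    refine ⟨quatI + I, fun h0 => hIi (eq_neg_of_add_eq_zero_right h0), ?_⟩
    rw [add_mul, mul_add, hi, hI, add_comm]

lemma IsImaginaryUnit.exists_mul_eq_neg_mul {I : ℍ[ℝ]} (hI : IsImaginaryUnit I) :
    ∃ J : ℍ[ℝ], IsImaginaryUnit J ∧ J * I = -(I * J) := by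
  obtain ⟨u, hu, hui⟩ := exists_ne_zero_mul_quatI_eq_mul (I := I) (by rw [← sq, hI.2])
  have hI' : I = u * quatI * u⁻¹ := by rw [hui, mul_inv_cancel_right₀ hu]
  have hjj : quatJ * quatJ = -1 := by ext <;> simp [re_mul, imI_mul, imJ_mul, imK_mul]
  have hji : quatJ * quatI = -(quatI * quatJ) := by
    ext <;> simp [re_mul, imI_mul, imJ_mul, imK_mul]
  refine ⟨u * quatJ * u⁻¹, ⟨?_, ?_⟩, ?_⟩
  · rw [Quaternion.re_mul_comm, ← mul_assoc, inv_mul_cancel₀ hu, one_mul]; rfl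
  · rw [sq]
    simp only [mul_assoc, inv_mul_cancel_left₀ hu]
    rw [← mul_assoc quatJ, hjj, neg_one_mul, mul_neg, mul_inv_cancel₀ hu]
  · rw [hI']
    simp only [mul_assoc, inv_mul_cancel_left₀ hu]
    rw [← mul_assoc quatJ, hji]
    noncomm_ring

lemma orthIm_of_mul_eq_neg_mul {I J : ℍ[ℝ]} (hI : I.re = 0) (hJ : J.re = 0)
    (hJI : J * I = -(I * J)) : OrthIm I J := by
  have hre := congrArg QuaternionAlgebra.re hJI
  rw [Quaternion.re_neg, Quaternion.re_mul_comm J I, re_mul, hI, hJ] at hre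
  unfold OrthIm; linarith

lemma IsImaginaryUnit.imI_sq_add_imJ_sq_add_imK_sq {I : ℍ[ℝ]} (hI : IsImaginaryUnit I) :
    I.imI ^ 2 + I.imJ ^ 2 + I.imK ^ 2 = 1 := by
  have := congrArg QuaternionAlgebra.re hI.2
  rw [sq, re_mul, hI.1] at this
  simp only [mul_zero, zero_sub, re_neg, re_one] at this
  linear_combination -this

section Slices

variable {A : Type*} [CommRing A] [Algebra ℝ A]

@[simp] lemma qmap_re (q : ℍ[ℝ]) : (qmap q : ℍ[A]).re = algebraMap ℝ A q.re := rfl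
@[simp] lemma qmap_imI (q : ℍ[ℝ]) : (qmap q : ℍ[A]).imI = algebraMap ℝ A q.imI := rfl
@[simp] lemma qmap_imJ (q : ℍ[ℝ]) : (qmap q : ℍ[A]).imJ = algebraMap ℝ A q.imJ := rfl
@[simp] lemma qmap_imK (q : ℍ[ℝ]) : (qmap q : ℍ[A]).imK = algebraMap ℝ A q.imK := rfl

lemma qmap_mul (p q : ℍ[ℝ]) : (qmap (p * q) : ℍ[A]) = qmap p * qmap q := by
  ext <;> simp [re_mul, imI_mul, imJ_mul, imK_mul]

lemma qmap_neg (p : ℍ[ℝ]) : (qmap (-p) : ℍ[A]) = -qmap p := by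
  ext <;> simp only [qmap_re, qmap_imI, qmap_imJ, qmap_imK, re_neg, imI_neg, imJ_neg, imK_neg,
    map_neg]

lemma qmap_one : (qmap 1 : ℍ[A]) = 1 := by
  ext <;> simp

lemma IsImaginaryUnit.qmap_mul_self {I : ℍ[ℝ]} (hI : IsImaginaryUnit I) :
    (qmap I * qmap I : ℍ[A]) = -1 := by
  rw [← qmap_mul, ← sq, hI.2, qmap_neg, qmap_one]

lemma star_qmap_of_re_eq_zero {I : ℍ[ℝ]} (hI : I.re = 0) : star (qmap I : ℍ[A]) = -qmap I := by
  ext <;> simp [hI]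

lemma re_coe_add_coe_mul_qmap {I : ℍ[ℝ]} (hI : I.re = 0) (a b : A) :
    ((a : ℍ[A]) + (b : ℍ[A]) * qmap I).re = a := by
  simp [re_mul, hI]

lemma normSq_coe_add_coe_mul_qmap {I : ℍ[ℝ]} (hI : IsImaginaryUnit I) (a b : A) :
    normSq ((a : ℍ[A]) + (b : ℍ[A]) * qmap I) = a ^ 2 + b ^ 2 := by
  have h := congrArg (algebraMap ℝ A) hI.imI_sq_add_imJ_sq_add_imK_sq
  simp only [map_add, map_pow, map_one] at h
  simp only [normSq_def', re_add, re_coe, re_mul, qmap_re, hI.1, map_zero, mul_zero, imI_coe,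
    qmap_imI, zero_mul, sub_self, imJ_coe, qmap_imJ, imK_coe, qmap_imK, add_zero, imI_add, imI_mul,
    sub_zero, zero_add, imJ_add, imJ_mul, imK_add, imK_mul]
  linear_combination b ^ 2 * h

omit [Algebra ℝ A] in
lemma isScalarQ_star {q : ℍ[A]} : IsScalarQ (star q) ↔ IsScalarQ q := by
  simp [IsScalarQ]

lemma isSliced_star {I : ℍ[ℝ]} (hI : I.re = 0) {q : ℍ[A]} (hq : IsSliced I q) :
    IsSliced I (star q) := by
  obtain ⟨a, b, rfl⟩ := hq
  refine ⟨a, -b, ?_⟩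
  rw [star_add, star_mul, star_coe, star_coe, star_qmap_of_re_eq_zero hI, ← coe_commutes, coe_neg]
  noncomm_ring

lemma IsSliced.eq_or_eq_star [IsDomain A] {I : ℍ[ℝ]} (hI : IsImaginaryUnit I) {x y : ℍ[A]}
    (hx : IsSliced I x) (hy : IsSliced I y) (hre : x.re = y.re)
    (hN : normSq x = normSq y) : y = x ∨ y = star x := by
  obtain ⟨a, b, rfl⟩ := hx
  obtain ⟨c, d, rfl⟩ := hy
  simp only [re_coe_add_coe_mul_qmap hI.1] at hre
  simp only [normSq_coe_add_coe_mul_qmap hI, hre, add_right_inj] at hN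
  subst hre
  rcases sq_eq_sq_iff_eq_or_eq_neg.1 hN with rfl | rfl
  · exact Or.inl rfl
  · right
    rw [star_add, star_mul, star_coe, star_coe, star_qmap_of_re_eq_zero hI.1, ← coe_commutes,
      coe_neg]
    noncomm_ring

omit [Algebra ℝ A] in
lemma coe_mul_left_cancel [IsDomain A] {b : A} (hb : b ≠ 0) {p q : ℍ[A]}
    (h : (b : ℍ[A]) * p = b * q) : p = q := by
  simp only [coe_mul_eq_smul] at h
  ext
  · exact mul_left_cancel₀ hb (congrArg QuaternionAlgebra.re h)
  · exact mul_left_cancel₀ hb (congrArg QuaternionAlgebra.imI h)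
  · exact mul_left_cancel₀ hb (congrArg QuaternionAlgebra.imJ h)
  · exact mul_left_cancel₀ hb (congrArg QuaternionAlgebra.imK h)

lemma ne_zero_of_not_isScalarQ {I : ℍ[ℝ]} {a b : A}
    (hx : ¬IsScalarQ ((a : ℍ[A]) + (b : ℍ[A]) * qmap I)) : b ≠ 0 := by
  rintro rfl
  exact hx (by simp [IsScalarQ])

lemma IsSliced.commute_qmap [IsDomain A] {I : ℍ[ℝ]} {x q : ℍ[A]} (hx : IsSliced I x)
    (hxs : ¬IsScalarQ x) (hq : Commute x q) : Commute (qmap I) q := by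
  obtain ⟨a, b, rfl⟩ := hx
  refine coe_mul_left_cancel (ne_zero_of_not_isScalarQ hxs) ?_
  have hq := hq.eq
  rwa [add_mul, mul_add, coe_commutes a q, add_left_cancel_iff, mul_assoc, ← mul_assoc q,
    ← coe_commutes b q, mul_assoc] at hq

lemma IsSliced.qmap_mul_eq_neg [IsDomain A] {I : ℍ[ℝ]} (hI : I.re = 0) {x q : ℍ[A]}
    (hx : IsSliced I x) (hxs : ¬IsScalarQ x) (hq : x * q = q * star x) :
    qmap I * q = -(q * qmap I) := by
  obtain ⟨a, b, rfl⟩ := hx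
  refine coe_mul_left_cancel (ne_zero_of_not_isScalarQ hxs) ?_
  rw [star_add, star_mul, star_coe, star_coe, star_qmap_of_re_eq_zero hI, add_mul, mul_add,
    coe_commutes a q, add_left_cancel_iff, mul_assoc] at hq
  rw [hq, neg_mul, mul_neg, mul_neg, ← mul_assoc, coe_commutes]

lemma isSliced_of_commute {I : ℍ[ℝ]} (hI : IsImaginaryUnit I) {q : ℍ[A]}
    (hq : Commute (qmap I) q) : IsSliced I q := by
  set P : ℍ[A] := qmap I
  set a : A := q.re
  set b : A := -(q * P).re
  -- `q ↦ (q - P * q * P) / 2` is the projection onto `A + A·P`, and it fixes `q` when `q`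
  -- commutes with `P`.
  have key : q - P * q * P = ((a : ℍ[A]) + (b : ℍ[A]) * P) + ((a : ℍ[A]) + (b : ℍ[A]) * P) +
      ((P.imI ^ 2 + P.imJ ^ 2 + P.imK ^ 2 - 1 : A) : ℍ[A]) * star q := by
    ext <;> simp [P, a, b, re_mul, imI_mul, imJ_mul, imK_mul, hI.1, -Quaternion.coe_pow] <;>
      ring
  have hsum : P.imI ^ 2 + P.imJ ^ 2 + P.imK ^ 2 = 1 := by
    simpa only [P, qmap_imI, qmap_imJ, qmap_imK, map_add, map_pow, map_one] using
      congrArg (algebraMap ℝ A) hI.imI_sq_add_imJ_sq_add_imK_sq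
  have hPqP : P * q * P = -q := by
    rw [hq.eq, mul_assoc, hI.qmap_mul_self, mul_neg_one]
  rw [hsum, sub_self, coe_zero, zero_mul, add_zero, hPqP, sub_neg_eq_add] at key
  refine ⟨a, b, smul_right_injective ℍ[A] (two_ne_zero (α := ℝ)) ?_⟩
  simpa only [two_smul] using key

lemma exists_isSliced_mul_qmap {I J : ℍ[ℝ]} (hI : IsImaginaryUnit I) (hJ : IsImaginaryUnit J)
    (hJI : J * I = -(I * J)) {q : ℍ[A]} (hq : qmap I * q = -(q * qmap I)) :
    ∃ q' : ℍ[A], IsSliced I q' ∧ q = q' * qmap J := by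
  have hJI' : (qmap J * qmap I : ℍ[A]) = -(qmap I * qmap J) := by
    rw [← qmap_mul, hJI, qmap_neg, qmap_mul]
  refine ⟨-(q * qmap J), isSliced_of_commute hI ?_, ?_⟩
  · show qmap I * -(q * qmap J) = -(q * qmap J) * qmap I
    rw [mul_neg, neg_mul, ← mul_assoc, hq, mul_assoc q, hJI']
    noncomm_ring
  · rw [neg_mul, mul_assoc, hJ.qmap_mul_self, mul_neg_one, neg_neg]

lemma exists_isSliced_qmap_mul {I J : ℍ[ℝ]} (hI : IsImaginaryUnit I) (hJ : IsImaginaryUnit J)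
    (hJI : J * I = -(I * J)) {q : ℍ[A]} (hq : qmap I * q = -(q * qmap I)) :
    ∃ q' : ℍ[A], IsSliced I q' ∧ q = qmap J * q' := by
  have hJI' : (qmap J * qmap I : ℍ[A]) = -(qmap I * qmap J) := by
    rw [← qmap_mul, hJI, qmap_neg, qmap_mul]
  refine ⟨-(qmap J * q), isSliced_of_commute hI ?_, ?_⟩
  · show qmap I * -(qmap J * q) = -(qmap J * q) * qmap I
    rw [mul_neg, neg_mul, ← mul_assoc, ← neg_neg (qmap I * qmap J), ← hJI', neg_mul,
      mul_assoc, hq]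
    noncomm_ring
  · rw [mul_neg, ← mul_assoc, hJ.qmap_mul_self, neg_one_mul, neg_neg]

end Slices

theorem two_sided_products_sliced_case_same_slice_general
    {A : Type*} [CommRing A] [IsDomain A] [Algebra ℝ A]
    (I₀ : Quaternion ℝ) (hI₀ : IsImaginaryUnit I₀)
    (f h : Quaternion A) (hf : f ≠ 0) (hh : h ≠ 0)
    (hfh : IsSliced I₀ (f * h)) (hfh' : ¬ IsScalarQ (f * h))
    (hhf : IsSliced I₀ (h * f)) :
    (IsSliced I₀ f ∧ IsSliced I₀ h) ∨
      ∃ J₀ K₀ : Quaternion ℝ, IsImaginaryUnit J₀ ∧ IsImaginaryUnit K₀ ∧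
        OrthIm I₀ J₀ ∧ OrthIm I₀ K₀ ∧
        ∃ ft ht : Quaternion A, IsSliced I₀ ft ∧ ft ≠ 0 ∧ IsSliced I₀ ht ∧ ht ≠ 0 ∧
          f = ft * qmap K₀ ∧ h = qmap J₀ * ht := by
  have hf_swap : (f * h) * f = f * (h * f) := mul_assoc f h f
  have hh_swap : (h * f) * h = h * (f * h) := mul_assoc h f h
  rcases hfh.eq_or_eq_star hI₀ hhf (Quaternion.re_mul_comm f h)
      (by rw [map_mul, map_mul, mul_comm]) with hx | hx <;>
    rw [hx] at hf_swap hh_swap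
  · exact Or.inl ⟨isSliced_of_commute hI₀ (hfh.commute_qmap hfh' hf_swap),
      isSliced_of_commute hI₀ (hfh.commute_qmap hfh' hh_swap)⟩
  · obtain ⟨J₀, hJ₀, hJI⟩ := hI₀.exists_mul_eq_neg_mul
    have hO : OrthIm I₀ J₀ := orthIm_of_mul_eq_neg_mul hI₀.1 hJ₀.1 hJI
    obtain ⟨ft, hft, rfl⟩ := exists_isSliced_mul_qmap hI₀ hJ₀ hJI
      (hfh.qmap_mul_eq_neg hI₀.1 hfh' hf_swap)
    obtain ⟨ht, hht, rfl⟩ := exists_isSliced_qmap_mul hI₀ hJ₀ hJI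
      ((isSliced_star hI₀.1 hfh).qmap_mul_eq_neg hI₀.1 (isScalarQ_star.not.2 hfh')
        (by rwa [star_star]))
    exact Or.inr ⟨J₀, J₀, hJ₀, hJ₀, hO, hO, ft, ht, hft, left_ne_zero_of_mul hf, hht,
      right_ne_zero_of_mul hh, rfl, rfl⟩

theorem two_sided_products_sliced_case_same_slice
    {A : Type*} [CommRing A] [IsDomain A] [Algebra ℝ A] (hFR : FormallyRealFour A)
    (I₀ : Quaternion ℝ) (hI₀ : IsImaginaryUnit I₀)
    (f h : Quaternion A) (hf : f ≠ 0) (hh : h ≠ 0)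
    (hfh : IsSliced I₀ (f * h)) (hfh' : ¬ IsScalarQ (f * h))
    (hhf : IsSliced I₀ (h * f)) (hhf' : ¬ IsScalarQ (h * f)) :
    (IsSliced I₀ f ∧ IsSliced I₀ h) ∨
      ∃ J₀ K₀ : Quaternion ℝ, IsImaginaryUnit J₀ ∧ IsImaginaryUnit K₀ ∧
        OrthIm I₀ J₀ ∧ OrthIm I₀ K₀ ∧
        ∃ ft ht : Quaternion A, IsSliced I₀ ft ∧ ft ≠ 0 ∧ IsSliced I₀ ht ∧ ht ≠ 0 ∧
          f = ft * qmap K₀ ∧ h = qmap J₀ * ht :=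
  two_sided_products_sliced_case_same_slice_general I₀ hI₀ f h hf hh hfh hfh' hhf
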